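/- Fix an integer d ≥ 2, an index 0 ≤ i ≤ d, and κ as below with κ'(1) > 1. Then, as L → ∞, κ'(1)^{−Ld/2}·M_i(L) converges to A_i · (η_1(κ'(1)−1))^{−d/2}, where A_i := (2√π / Γ((d+1)/2)) · ∫_{ℝ^d} Π(λ)·𝟙_{O_i}(λ)·f_{1/2}(λ) dλ. (High-disorder regime of Theorem 3.2: the Kac–Rice expression grows exponentially in the depth L.) -/

import Mathlib

open MeasureTheory Filter Real

/-- `K_d := 2^{d/2} ∏_{j=1}^d Γ(j/2)`. -/
noncomputable def Kd (d : ℕ) : ℝ :=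
  2 ^ ((d : ℝ) / 2) * ∏ j ∈ Finset.Icc 1 d, Real.Gamma ((j : ℝ) / 2)

/-- `Π(λ) := ∏_{j=1}^d |λ_j|`. -/
noncomputable def PiAbs (d : ℕ) (lam : Fin d → ℝ) : ℝ := ∏ j, |lam j|

/-- `Δ(λ) := ∏_{1 ≤ h < k ≤ d} |λ_h − λ_k|`. -/
noncomputable def DeltaV (d : ℕ) (lam : Fin d → ℝ) : ℝ :=
  ∏ h : Fin d, ∏ k : Fin d, if h < k then |lam h - lam k| else 1

/-- The density of the ordered eigenvalues of a GOI(c) matrix. -/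
noncomputable def fGOI (d : ℕ) (c : ℝ) (lam : Fin d → ℝ) : ℝ :=
  (Kd d * Real.sqrt (1 + d * c))⁻¹ * DeltaV d lam *
    Real.exp (-(∑ j, lam j ^ 2) / 2 + c * (∑ j, lam j) ^ 2 / (2 * (1 + d * c))) *
    Set.indicator {x : Fin d → ℝ | Monotone x} (fun _ => 1) lam

/-- `O_i := {λ : λ_i < 0 < λ_{i+1}}` with conventions `λ_0 = −∞`, `λ_{d+1} = +∞`
(one-based indexing; coordinates here are zero-based). -/
def Oi (d i : ℕ) : Set (Fin d → ℝ) :=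
  {lam | (∀ j : Fin d, (j : ℕ) + 1 = i → lam j < 0) ∧ (∀ j : Fin d, (j : ℕ) = i → 0 < lam j)}

/-- `∫_{ℝ^d} Π(λ)·𝟙_{O_i}(λ)·f_c(λ) dλ`. -/
noncomputable def GOIint (d i : ℕ) (c : ℝ) : ℝ :=
  ∫ lam : Fin d → ℝ,
    PiAbs d lam * Set.indicator (Oi d i) (fun _ => 1) lam * fGOI d c lam

/-- `η_L := κ_L'(1)/κ_L''(1)` where `κ_L` is the `L`-fold iterate of `κ`. -/
noncomputable def etaL (κ : ℝ → ℝ) (L : ℕ) : ℝ :=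
  deriv (κ^[L]) 1 / deriv (deriv (κ^[L])) 1

/-- The Kac–Rice expression for the expected number of critical points of index `i`
of the depth-`L` limiting field on `S^d`. -/
noncomputable def Mcrit (d i : ℕ) (κ : ℝ → ℝ) (L : ℕ) : ℝ :=
  2 * Real.sqrt π / Real.Gamma (((d : ℝ) + 1) / 2) * etaL κ L ^ (-(d : ℝ) / 2) *
    GOIint d i ((1 + etaL κ L) / 2)

/-!
At the fixed point `1` the chain rule gives `κ_L'(1) = a ^ L` and
`κ_L''(1) = b a^(L-1) (1 + a + ⋯ + a^(L-1))`, where `a = κ'(1)` and `b = κ''(1)`; hence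
`η_L = a / (b (1 + a + ⋯ + a^(L-1)))`. For `a > 1` this gives `a ^ L η_L → η_1 (a - 1)` and
`η_L → 0`. After rescaling, `M_i(L)` is a constant times `(a ^ L η_L)^(-d/2)` times the integral
at `c = (1 + η_L) / 2`, and that integral is continuous in `c > 0` by dominated convergence: for
`0 ≤ c ≤ C` the Gaussian factor of `f_c` is at most `exp (-‖λ‖² / (2 (1 + d C)))`, because
`(∑ λ_j)² ≤ d ‖λ‖²`.
-/

open Topology

theorem ContDiff.iterate {𝕜 E : Type*} [NontriviallyNormedField 𝕜] [NormedAddCommGroup E]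
    [NormedSpace 𝕜 E] {n : WithTop ℕ∞} {f : E → E} (hf : ContDiff 𝕜 n f) :
    ∀ k : ℕ, ContDiff 𝕜 n f^[k]
  | 0 => contDiff_id
  | k + 1 => by rw [Function.iterate_succ']; exact hf.comp (hf.iterate k)

section FixedPoint

variable {𝕜 : Type*} [NontriviallyNormedField 𝕜] {f : 𝕜 → 𝕜} {x : 𝕜}

theorem deriv_iterate_of_fixed (hf : DifferentiableAt 𝕜 f x) (hx : f x = x) (n : ℕ) :
    deriv f^[n] x = deriv f x ^ n :=
  (hf.hasDerivAt.iterate _ hx n).deriv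

theorem deriv_deriv_iterate_of_fixed (hf : ContDiff 𝕜 2 f) (hx : f x = x) (n : ℕ) :
    deriv f x * deriv (deriv f^[n]) x
      = deriv (deriv f) x * deriv f x ^ n * ∑ k ∈ Finset.range n, deriv f x ^ k := by
  induction n with
  | zero => simp
  | succ n ih =>
    have hfn := hf.iterate n
    have hd : deriv f^[n + 1] = fun y => deriv f (f^[n] y) * deriv f^[n] y := by
      ext y
      rw [Function.iterate_succ']
      exact deriv_comp y (hf.differentiable two_ne_zero _) (hfn.differentiable two_ne_zero y)
    have hd' : HasDerivAt (fun y => deriv f (f^[n] y)) (deriv (deriv f) x * deriv f x ^ n) x := by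
      have := (hf.differentiable_deriv_two (f^[n] x)).hasDerivAt.comp x
        ((hf.differentiable two_ne_zero x).hasDerivAt.iterate _ hx n)
      rwa [Function.iterate_fixed hx] at this
    rw [hd, (hd'.fun_mul (hfn.differentiable_deriv_two x).hasDerivAt).deriv,
      Function.iterate_fixed hx, deriv_iterate_of_fixed (hf.differentiable two_ne_zero x) hx,
      Finset.sum_range_succ]
    linear_combination deriv f x * ih

end FixedPoint

section Eta

variable {κ : ℝ → ℝ}

theorem etaL_eq (hκ : ContDiff ℝ 2 κ) (hfix : κ 1 = 1) (ha : deriv κ 1 ≠ 0) (L : ℕ) :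
    etaL κ L = deriv κ 1 / (deriv (deriv κ) 1 * ∑ k ∈ Finset.range L, deriv κ 1 ^ k) := by
  have h₂ : deriv (deriv κ^[L]) 1 = deriv κ 1 ^ L *
      (deriv (deriv κ) 1 * ∑ k ∈ Finset.range L, deriv κ 1 ^ k) / deriv κ 1 := by
    rw [eq_div_iff ha]
    linear_combination deriv_deriv_iterate_of_fixed hκ hfix L
  rw [etaL, deriv_iterate_of_fixed (hκ.differentiable two_ne_zero 1) hfix, h₂,
    div_div_eq_mul_div, mul_div_mul_left _ _ (pow_ne_zero L ha)]

theorem etaL_nonneg (hκ : ContDiff ℝ 2 κ) (hfix : κ 1 = 1) (ha : 0 < deriv κ 1)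
    (hb : 0 ≤ deriv (deriv κ) 1) (L : ℕ) : 0 ≤ etaL κ L := by
  rw [etaL_eq hκ hfix ha.ne']
  have := Finset.sum_nonneg fun k (_ : k ∈ Finset.range L) => (pow_pos ha k).le
  positivity

theorem tendsto_pow_mul_etaL (hκ : ContDiff ℝ 2 κ) (hfix : κ 1 = 1) (ha : 1 < deriv κ 1) :
    Tendsto (fun L => deriv κ 1 ^ L * etaL κ L) atTop
      (𝓝 (deriv κ 1 / deriv (deriv κ) 1 * (deriv κ 1 - 1))) := by
  set a := deriv κ 1 with ha_def
  set b := deriv (deriv κ) 1 with hb_def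
  have ha₀ : a ≠ 0 := by positivity
  have hlim : Tendsto (fun L : ℕ => a / b * (a - 1) * (1 - a⁻¹ ^ L)⁻¹) atTop
      (𝓝 (a / b * (a - 1))) := by
    have h := tendsto_pow_atTop_nhds_zero_of_lt_one (by positivity) (inv_lt_one_of_one_lt₀ ha)
    simpa using (((tendsto_const_nhds (x := (1 : ℝ))).sub h).inv₀ (by norm_num)).const_mul
      (a / b * (a - 1))
  refine hlim.congr' ?_
  filter_upwards [eventually_ge_atTop 1] with L hL
  have haL : a ^ L - 1 ≠ 0 := sub_ne_zero.2 (one_lt_pow₀ ha (by omega)).ne'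
  have hG : ∑ k ∈ Finset.range L, a ^ k = (a ^ L - 1) / (a - 1) :=
    eq_div_of_mul_eq (sub_ne_zero.2 ha.ne') (geom_sum_mul a L)
  have h₁ : 1 - a⁻¹ ^ L = (a ^ L - 1) / a ^ L := by
    rw [eq_div_iff (pow_ne_zero L ha₀), sub_mul, ← mul_pow, inv_mul_cancel₀ ha₀, one_pow, one_mul]
  rw [etaL_eq hκ hfix ha₀, ← ha_def, ← hb_def, hG, h₁]
  rcases eq_or_ne b 0 with hb | hb
  · simp [hb]
  · field_simp

theorem tendsto_etaL (hκ : ContDiff ℝ 2 κ) (hfix : κ 1 = 1) (ha : 1 < deriv κ 1) :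
    Tendsto (etaL κ) atTop (𝓝 0) := by
  have h := (tendsto_pow_mul_etaL hκ hfix ha).mul
    (tendsto_pow_atTop_nhds_zero_of_lt_one (by positivity) (inv_lt_one_of_one_lt₀ ha))
  rw [mul_zero] at h
  refine h.congr fun L => ?_
  rw [mul_right_comm, ← mul_pow, mul_inv_cancel₀ (by positivity), one_pow, one_mul]

end Eta

section GOI

variable {d : ℕ}

lemma Kd_pos (d : ℕ) : 0 < Kd d :=
  mul_pos (rpow_pos_of_pos two_pos _) <| Finset.prod_pos fun _ hj =>
    Gamma_pos_of_pos <| div_pos (Nat.cast_pos.2 (Finset.mem_Icc.1 hj).1) two_pos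

lemma PiAbs_nonneg (lam : Fin d → ℝ) : 0 ≤ PiAbs d lam :=
  Finset.prod_nonneg fun _ _ => abs_nonneg _

lemma DeltaV_nonneg (lam : Fin d → ℝ) : 0 ≤ DeltaV d lam :=
  Finset.prod_nonneg fun _ _ => Finset.prod_nonneg fun _ _ => by split_ifs <;> positivity

lemma fGOI_nonneg (c : ℝ) (lam : Fin d → ℝ) : 0 ≤ fGOI d c lam :=
  mul_nonneg (mul_nonneg (mul_nonneg (by have := Kd_pos d; positivity) (DeltaV_nonneg lam))
    (exp_pos _).le) (Set.indicator_nonneg (fun _ _ => zero_le_one) _)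

lemma measurable_DeltaV (d : ℕ) : Measurable (DeltaV d) :=
  Finset.measurable_prod _ fun _ _ => Finset.measurable_prod _ fun _ _ => by
    split_ifs <;> fun_prop

lemma measurableSet_Oi (d i : ℕ) : MeasurableSet (Oi d i) := by
  unfold Oi
  measurability

lemma measurable_fGOI (d : ℕ) (c : ℝ) : Measurable (fGOI d c) := by
  have := measurable_DeltaV d
  have : MeasurableSet {x : Fin d → ℝ | Monotone x} := isClosed_monotone.measurableSet
  unfold fGOI
  fun_prop (disch := assumption)

lemma continuousAt_fGOI {c : ℝ} (hc : 0 < 1 + d * c) (lam : Fin d → ℝ) :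
    ContinuousAt (fun c => fGOI d c lam) c := by
  unfold fGOI
  fun_prop (disch := first
    | exact mul_ne_zero two_ne_zero hc.ne'
    | exact (mul_pos (Kd_pos d) (sqrt_pos.2 hc)).ne')

lemma fGOI_exponent_le {c C : ℝ} (hc : 0 ≤ c) (hcC : c ≤ C) (lam : Fin d → ℝ) :
    -(∑ j, lam j ^ 2) / 2 + c * (∑ j, lam j) ^ 2 / (2 * (1 + d * c))
      ≤ -(2 * (1 + d * C))⁻¹ * ∑ j, lam j ^ 2 := by
  have hCS : (∑ j, lam j) ^ 2 ≤ d * ∑ j, lam j ^ 2 := by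
    simpa using sq_sum_le_card_mul_sum_sq (s := Finset.univ) (f := lam)
  calc -(∑ j, lam j ^ 2) / 2 + c * (∑ j, lam j) ^ 2 / (2 * (1 + d * c))
      ≤ -(∑ j, lam j ^ 2) / 2 + c * (d * ∑ j, lam j ^ 2) / (2 * (1 + d * c)) := by gcongr
    _ = -(2 * (1 + d * c))⁻¹ * ∑ j, lam j ^ 2 := by field_simp; ring
    _ ≤ -(2 * (1 + d * C))⁻¹ * ∑ j, lam j ^ 2 := by
      gcongr

lemma fGOI_le {c C : ℝ} (hc : 0 ≤ c) (hcC : c ≤ C) (lam : Fin d → ℝ) :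
    fGOI d c lam ≤ (Kd d)⁻¹ * DeltaV d lam * exp (-(2 * (1 + d * C))⁻¹ * ∑ j, lam j ^ 2) := by
  have hK := Kd_pos d
  have hΔ := DeltaV_nonneg lam
  have h₁ : 1 ≤ √(1 + d * c) := one_le_sqrt.2 (by nlinarith [d.cast_nonneg (α := ℝ)])
  calc fGOI d c lam
      ≤ (Kd d * √(1 + d * c))⁻¹ * DeltaV d lam *
          exp (-(∑ j, lam j ^ 2) / 2 + c * (∑ j, lam j) ^ 2 / (2 * (1 + d * c))) * 1 := by
        unfold fGOI
        gcongr
        exact Set.indicator_le_self' (fun _ _ => zero_le_one) lam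
    _ ≤ (Kd d)⁻¹ * DeltaV d lam * exp (-(2 * (1 + d * C))⁻¹ * ∑ j, lam j ^ 2) := by
        rw [mul_one]
        gcongr
        · exact le_mul_of_one_le_right hK.le h₁
        · exact fGOI_exponent_le hc hcC lam

lemma PiAbs_mul_DeltaV_le (lam : Fin d → ℝ) :
    PiAbs d lam * DeltaV d lam ≤ ∏ j, (1 + |lam j|) ^ (2 * d + 1) := by
  calc PiAbs d lam * DeltaV d lam
      ≤ (∏ j, (1 + |lam j|)) * ∏ h : Fin d, ∏ k : Fin d, (1 + |lam h|) * (1 + |lam k|) := by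
        gcongr
        · exact DeltaV_nonneg lam
        · exact Finset.prod_le_prod (fun _ _ => abs_nonneg _)
            fun _ _ => le_add_of_nonneg_left zero_le_one
        · unfold DeltaV
          gcongr with h _ k _
          have := abs_nonneg (lam h)
          have := abs_nonneg (lam k)
          split_ifs
          · nlinarith [abs_sub (lam h) (lam k)]
          · nlinarith
    _ = ∏ j, (1 + |lam j|) ^ (2 * d + 1) := by
        simp only [Finset.prod_mul_distrib, Finset.prod_const, Finset.card_univ,
          Fintype.card_fin, Finset.prod_pow]
        ring

lemma PiAbs_mul_indicator_mul_fGOI_le (i : ℕ) {c C : ℝ} (hc : 0 ≤ c) (hcC : c ≤ C) (lam : Fin d → ℝ) :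
    PiAbs d lam * Set.indicator (Oi d i) (fun _ => 1) lam * fGOI d c lam
      ≤ (Kd d)⁻¹ * ∏ j, ((1 + |lam j|) ^ (2 * d + 1) * exp (-(2 * (1 + d * C))⁻¹ * lam j ^ 2)) := by
  have := PiAbs_nonneg lam
  have := fGOI_nonneg c lam
  calc PiAbs d lam * Set.indicator (Oi d i) (fun _ => 1) lam * fGOI d c lam
      ≤ PiAbs d lam * 1 * ((Kd d)⁻¹ * DeltaV d lam *
          exp (-(2 * (1 + d * C))⁻¹ * ∑ j, lam j ^ 2)) := by
        gcongr
        · exact Set.indicator_le_self' (fun _ _ => zero_le_one) lam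
        · exact fGOI_le hc hcC lam
    _ = (Kd d)⁻¹ * (PiAbs d lam * DeltaV d lam) *
          exp (-(2 * (1 + d * C))⁻¹ * ∑ j, lam j ^ 2) := by ring
    _ ≤ (Kd d)⁻¹ * (∏ j, (1 + |lam j|) ^ (2 * d + 1)) *
          exp (-(2 * (1 + d * C))⁻¹ * ∑ j, lam j ^ 2) := by
        have := (Kd_pos d).le
        gcongr
        exact PiAbs_mul_DeltaV_le lam
    _ = (Kd d)⁻¹ * ∏ j, ((1 + |lam j|) ^ (2 * d + 1) * exp (-(2 * (1 + d * C))⁻¹ * lam j ^ 2)) := by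
        rw [Finset.mul_sum, exp_sum, Finset.prod_mul_distrib, mul_assoc]

lemma integrable_one_add_abs_pow_mul_exp_neg_mul_sq (n : ℕ) {b : ℝ} (hb : 0 < b) :
    Integrable fun x : ℝ => (1 + |x|) ^ n * exp (-b * x ^ 2) := by
  have hpow : Integrable fun x : ℝ => |x| ^ n * exp (-b * x ^ 2) := by
    simpa [rpow_natCast, abs_mul, abs_pow] using
      (integrable_rpow_mul_exp_neg_mul_sq hb (s := n) (by linarith [n.cast_nonneg (α := ℝ)])).abs
  refine (((integrable_exp_neg_mul_sq hb).add hpow).const_mul (2 ^ (n - 1))).mono'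
    (by fun_prop) (ae_of_all _ fun x => ?_)
  rw [Pi.add_apply, norm_of_nonneg (by positivity), ← one_add_mul, ← mul_assoc]
  have := add_pow_le zero_le_one (abs_nonneg x) n
  rw [one_pow] at this
  gcongr

theorem continuousAt_GOIint (d i : ℕ) {c : ℝ} (hc : 0 < c) : ContinuousAt (GOIint d i) c := by
  have hε : 0 < (2 * (1 + d * (2 * c)))⁻¹ := by positivity
  refine continuousAt_of_dominated (bound := fun lam : Fin d → ℝ => (Kd d)⁻¹ *
      ∏ j, ((1 + |lam j|) ^ (2 * d + 1) * exp (-(2 * (1 + d * (2 * c)))⁻¹ * lam j ^ 2)))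
    (Eventually.of_forall fun c' => ?_) ?_ ?_ (ae_of_all _ fun lam => ?_)
  · have := measurableSet_Oi d i
    have := measurable_fGOI d c'
    unfold PiAbs
    fun_prop (disch := assumption)
  · filter_upwards [Icc_mem_nhds (by linarith : 0 < c) (by linarith : c < 2 * c)] with c' hc'
    refine ae_of_all _ fun lam => ?_
    rw [norm_of_nonneg (mul_nonneg (mul_nonneg (PiAbs_nonneg lam)
      (Set.indicator_nonneg (fun _ _ => zero_le_one) _)) (fGOI_nonneg c' lam))]
    exact PiAbs_mul_indicator_mul_fGOI_le i hc'.1 hc'.2 lam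
  · exact (Integrable.fintype_prod fun _ =>
      integrable_one_add_abs_pow_mul_exp_neg_mul_sq _ hε).const_mul _
  · exact continuousAt_const.mul (continuousAt_fGOI (by positivity) lam)

end GOI

theorem statement2_general (d i : ℕ) (κ : ℝ → ℝ)
    (hsmooth : ContDiff ℝ 2 κ) (hfix : κ 1 = 1)
    (hpos2 : 0 < deriv (deriv κ) 1)
    (hhigh : 1 < deriv κ 1) :
    Tendsto (fun L : ℕ => deriv κ 1 ^ (-((L : ℝ) * d) / 2) * Mcrit d i κ L) atTop
      (nhds ((2 * Real.sqrt π / Real.Gamma (((d : ℝ) + 1) / 2) * GOIint d i (1 / 2)) *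
        (deriv κ 1 / deriv (deriv κ) 1 * (deriv κ 1 - 1)) ^ (-(d : ℝ) / 2))) := by
  have ha : 0 < deriv κ 1 := zero_lt_one.trans hhigh
  have hscale : Tendsto (fun L => (deriv κ 1 ^ L * etaL κ L) ^ (-(d : ℝ) / 2)) atTop
      (𝓝 ((deriv κ 1 / deriv (deriv κ) 1 * (deriv κ 1 - 1)) ^ (-(d : ℝ) / 2))) :=
    (continuousAt_rpow_const _ _ (Or.inl (by have := sub_pos.2 hhigh; positivity))).tendsto.comp
      (tendsto_pow_mul_etaL hsmooth hfix hhigh)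
  have hint : Tendsto (fun L => GOIint d i ((1 + etaL κ L) / 2)) atTop (𝓝 (GOIint d i (1 / 2))) :=
    (continuousAt_GOIint d i one_half_pos).tendsto.comp <| by
      simpa using ((tendsto_etaL hsmooth hfix hhigh).const_add 1).div_const 2
  convert (hint.mul hscale).const_mul (2 * √π / Gamma (((d : ℝ) + 1) / 2)) using 1
  · ext L
    have hsplit : deriv κ 1 ^ (-((L : ℝ) * d) / 2) * etaL κ L ^ (-(d : ℝ) / 2)
        = (deriv κ 1 ^ L * etaL κ L) ^ (-(d : ℝ) / 2) := by
      rw [mul_rpow (by positivity) (etaL_nonneg hsmooth hfix ha hpos2.le L), ← rpow_natCast,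
        ← rpow_mul ha.le]
      ring_nf
    simp only [Mcrit, ← hsplit]
    ring
  · rw [mul_assoc]

/-- High-disorder regime of Theorem 3.2: if `κ'(1) > 1` then `κ'(1)^{−Ld/2}·M_i(L)`
converges to `A_i·(η_1(κ'(1)−1))^{−d/2}`. -/
theorem statement2 (d i : ℕ) (hd : 2 ≤ d) (hi : i ≤ d) (κ : ℝ → ℝ)
    (hsmooth : ContDiff ℝ 2 κ) (hfix : κ 1 = 1)
    (hpos1 : 0 < deriv κ 1) (hpos2 : 0 < deriv (deriv κ) 1)
    (hhigh : 1 < deriv κ 1) :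
    Tendsto (fun L : ℕ => deriv κ 1 ^ (-((L : ℝ) * d) / 2) * Mcrit d i κ L) atTop
      (nhds ((2 * Real.sqrt π / Real.Gamma (((d : ℝ) + 1) / 2) * GOIint d i (1 / 2)) *
        (deriv κ 1 / deriv (deriv κ) 1 * (deriv κ 1 - 1)) ^ (-(d : ℝ) / 2))) :=
  statement2_general d i κ hsmooth hfix hpos2 hhigh
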